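/- arXiv:2205.02027 — 5 statements merged into one kernel-verified Lean document; each statement's English description precedes it below -/
import Mathlib

section
/- For each real α ∈ (0,1], the sequence n ↦ (binom(n + ⌈αn⌉, ⌈αn⌉))^(1/n) converges to (1+α)^(1+α)/α^α as n → ∞. -/
/-!
In the binomial expansion `(n + k) ^ (n + k) = ∑ i, n ^ i * k ^ (n + k - i) * C(n + k, i)` the
term `i = n` is the largest: consecutive terms compare through the factor
`(n + k - i) * n / ((i + 1) * k)`, which is `≥ 1` exactly for `i < n`. Hence
`C(n + k, k) * n ^ n * k ^ k` lies between `(n + k) ^ (n + k) / (n + k + 1)` and `(n + k) ^ (n + k)`,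
and taking `n`-th roots, `C(n + k, k) ^ (1 / n)` lies between `g (k / n) / (n + k + 1) ^ (1 / n)`
and `g (k / n)`, where `g x = (1 + x) ^ (1 + x) / x ^ x`. For `k = ⌈α n⌉` we have `k / n → α`,
`(n + k + 1) ^ (1 / n) → 1`, and `g` is continuous at `α > 0`.
-/

open Filter Topology

namespace Nat

theorem pow_mul_pow_sub_mul_choose_succ (a b i : ℕ) (hi : i < a + b) :
    a ^ (i + 1) * b ^ (a + b - (i + 1)) * (a + b).choose (i + 1) * ((i + 1) * b) =
      a ^ i * b ^ (a + b - i) * (a + b).choose i * ((a + b - i) * a) := by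
  obtain ⟨r, hr⟩ : ∃ r, a + b - i = r + 1 := ⟨a + b - (i + 1), by omega⟩
  have hc := Nat.choose_succ_right_eq (a + b) i
  rw [hr] at hc ⊢
  rw [show a + b - (i + 1) = r by omega]
  linear_combination (a ^ (i + 1) * b ^ (r + 1)) * hc

theorem pow_mul_pow_sub_mul_choose_le (a : ℕ) {b : ℕ} (hb : 0 < b) (i : ℕ) :
    a ^ i * b ^ (a + b - i) * (a + b).choose i ≤ a ^ a * b ^ b * (a + b).choose a := by
  set f : ℕ → ℕ := fun i ↦ a ^ i * b ^ (a + b - i) * (a + b).choose i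
  have hfa : f a = a ^ a * b ^ b * (a + b).choose a := by simp [f]
  have hstep := fun i hi ↦ pow_mul_pow_sub_mul_choose_succ a b i hi
  rw [← hfa]
  change f i ≤ f a
  rcases le_total i a with hia | hai
  · refine monotoneOn_of_le_succ (f := f) (Set.ordConnected_Iic (a := a)) (fun j _ _ hj ↦ ?_)
      hia Set.self_mem_Iic hia
    have hja : j + 1 ≤ a := hj
    refine le_of_mul_le_mul_right ?_ (Nat.mul_pos j.succ_pos hb)
    calc f j * ((j + 1) * b) ≤ f j * ((a + b - j) * a) := by
          gcongr f j * ?_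
          calc (j + 1) * b ≤ a * (a + b - j) := Nat.mul_le_mul hja (by omega)
            _ = (a + b - j) * a := Nat.mul_comm _ _
      _ = f (j + 1) * ((j + 1) * b) := (hstep j (by omega)).symm
  · refine Nat.rel_of_forall_rel_succ_of_le_of_le (· ≥ ·) (f := f) (fun j hj ↦ ?_) le_rfl hai
    rcases lt_or_ge j (a + b) with hj' | hj'
    · refine le_of_mul_le_mul_right ?_ (Nat.mul_pos j.succ_pos hb)
      calc f (j + 1) * ((j + 1) * b) = f j * ((a + b - j) * a) := hstep j hj'
        _ ≤ f j * ((j + 1) * b) := by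
          gcongr f j * ?_
          calc (a + b - j) * a ≤ b * (j + 1) := Nat.mul_le_mul (by omega) (by omega)
            _ = (j + 1) * b := Nat.mul_comm _ _
    · simp [f, Nat.choose_eq_zero_of_lt (show a + b < j + 1 by omega)]

theorem pow_mul_pow_mul_choose_le_add_pow (a b : ℕ) :
    a ^ a * b ^ b * (a + b).choose a ≤ (a + b) ^ (a + b) := by
  rw [add_pow]
  calc a ^ a * b ^ b * (a + b).choose a = a ^ a * b ^ (a + b - a) * (a + b).choose a := by
        rw [Nat.add_sub_cancel_left]
    _ ≤ _ := Finset.single_le_sum (f := fun i ↦ a ^ i * b ^ (a + b - i) * (a + b).choose i)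
        (fun _ _ ↦ Nat.zero_le _) (Finset.mem_range.mpr (by omega))

theorem add_pow_le_succ_mul_pow_mul_pow_mul_choose (a : ℕ) {b : ℕ} (hb : 0 < b) :
    (a + b) ^ (a + b) ≤ (a + b + 1) * (a ^ a * b ^ b * (a + b).choose a) := by
  rw [add_pow]
  simpa using Finset.sum_le_card_nsmul (Finset.range (a + b + 1)) _ _
    (fun i _ ↦ pow_mul_pow_sub_mul_choose_le a hb i)

end Nat

open Real

noncomputable def growthRate (x : ℝ) : ℝ := (1 + x) ^ (1 + x) / x ^ x

theorem growthRate_nonneg {x : ℝ} (hx : 0 ≤ x) : 0 ≤ growthRate x := by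
  unfold growthRate; positivity

theorem continuousAt_growthRate {x : ℝ} (hx : 0 < x) : ContinuousAt growthRate x := by
  have hx1 : 1 + x ≠ 0 := by positivity
  exact ((continuousAt_const.add continuousAt_id).rpow (continuousAt_const.add continuousAt_id)
    (.inl hx1)).div (continuousAt_id.rpow continuousAt_id (.inl hx.ne')) (by positivity)

theorem add_rpow_add_div_rpow_mul_rpow {a b : ℝ} (ha : 0 < a) (hb : 0 ≤ b) :
    (a + b) ^ (a + b) / (a ^ a * b ^ b) = growthRate (b / a) ^ a := by
  obtain ⟨x, hx0, rfl⟩ : ∃ x, 0 ≤ x ∧ b = a * x := ⟨b / a, div_nonneg hb ha.le, by field_simp⟩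
  have hpow : ∀ y : ℝ, 0 ≤ y → (a * y) ^ (a * y) = a ^ (a * y) * (y ^ y) ^ a := fun y hy ↦ by
    rw [mul_rpow ha.le hy, ← rpow_mul hy, mul_comm y a]
  rw [mul_div_cancel_left₀ _ ha.ne', show a + a * x = a * (1 + x) by ring, hpow _ (by positivity),
    hpow x hx0, mul_add, mul_one, rpow_add ha, growthRate, div_rpow (by positivity) (by positivity)]
  field_simp

theorem natCast_add_pow_div_pow_mul_pow {n k : ℕ} (hn : 0 < n) :
    (((n + k) ^ (n + k) : ℕ) : ℝ) / ((n ^ n * k ^ k : ℕ) : ℝ) = growthRate (k / n) ^ (n : ℝ) := by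
  rw [← add_rpow_add_div_rpow_mul_rpow (Nat.cast_pos.mpr hn) k.cast_nonneg]
  push_cast
  simp only [← Nat.cast_add, rpow_natCast]

theorem choose_rpow_inv_le_growthRate {n : ℕ} (hn : 0 < n) {k : ℕ} (hk : 0 < k) :
    ((n + k).choose k : ℝ) ^ (n : ℝ)⁻¹ ≤ growthRate (k / n) := by
  rw [rpow_inv_le_iff_of_pos (by positivity) (growthRate_nonneg (by positivity)) (by positivity),
    ← natCast_add_pow_div_pow_mul_pow hn, le_div_iff₀ (by positivity), ← Nat.cast_mul, Nat.cast_le,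
    ← Nat.choose_symm_add, mul_comm]
  exact Nat.pow_mul_pow_mul_choose_le_add_pow n k

theorem growthRate_div_le_choose_rpow_inv {n : ℕ} (hn : 0 < n) {k : ℕ} (hk : 0 < k) :
    growthRate (k / n) / (n + k + 1 : ℝ) ^ (n : ℝ)⁻¹ ≤ ((n + k).choose k : ℝ) ^ (n : ℝ)⁻¹ := by
  rw [div_le_iff₀ (by positivity), ← mul_rpow (by positivity) (by positivity),
    le_rpow_inv_iff_of_pos (growthRate_nonneg (by positivity)) (by positivity) (by positivity),
    ← natCast_add_pow_div_pow_mul_pow hn, div_le_iff₀ (by positivity)]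
  have h := Nat.add_pow_le_succ_mul_pow_mul_pow_mul_choose n hk
  rw [Nat.choose_symm_add] at h
  calc (((n + k) ^ (n + k) : ℕ) : ℝ) ≤ ((n + k + 1) * (n ^ n * k ^ k * (n + k).choose k) : ℕ) := by
        exact_mod_cast h
    _ = _ := by push_cast; ring

theorem tendsto_rpow_inv_of_tendsto_div_natCast {u : ℕ → ℝ} {c : ℝ} (hc : 0 < c)
    (hu : Tendsto (fun n ↦ u n / n) atTop (𝓝 c)) :
    Tendsto (fun n : ℕ ↦ u n ^ (n : ℝ)⁻¹) atTop (𝓝 1) := by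
  have hroot : Tendsto (fun n : ℕ ↦ (n : ℝ) ^ (n : ℝ)⁻¹) atTop (𝓝 1) := by
    simpa only [one_div, Function.comp_def] using tendsto_rpow_div.comp tendsto_natCast_atTop_atTop
  have hinv : Tendsto (fun n : ℕ ↦ (n : ℝ)⁻¹) atTop (𝓝 0) :=
    tendsto_inv_atTop_zero.comp tendsto_natCast_atTop_atTop
  have hratio := hu.rpow hinv (.inl hc.ne')
  have hprod := hroot.mul hratio
  rw [rpow_zero, one_mul] at hprod
  refine hprod.congr' ?_
  filter_upwards [eventually_gt_atTop 0, hu.eventually (eventually_ge_nhds hc)] with n hn hun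
  have hn' : (0 : ℝ) < n := Nat.cast_pos.mpr hn
  rw [← mul_rpow hn'.le hun, mul_div_cancel₀ _ hn'.ne']

theorem stmt0_general (α : ℝ) (hα0 : 0 < α) :
    Tendsto
      (fun n : ℕ =>
        (((n + ⌈α * (n : ℝ)⌉₊).choose ⌈α * (n : ℝ)⌉₊ : ℝ)) ^ (1 / (n : ℝ)))
      atTop (nhds ((1 + α) ^ (1 + α) / α ^ α)) := by
  have hk : Tendsto (fun n : ℕ ↦ (⌈α * n⌉₊ : ℝ) / n) atTop (𝓝 α) :=
    (tendsto_nat_ceil_mul_div_atTop hα0.le).comp tendsto_natCast_atTop_atTop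
  have hG := (continuousAt_growthRate hα0).tendsto.comp hk
  have hsucc : Tendsto (fun n : ℕ ↦ (n + ⌈α * n⌉₊ + 1 : ℝ) ^ (n : ℝ)⁻¹) atTop (𝓝 1) := by
    refine tendsto_rpow_inv_of_tendsto_div_natCast (c := 1 + α + 0) (by positivity) ?_
    refine ((tendsto_const_nhds.add hk).add (tendsto_one_div_atTop_nhds_zero_nat)).congr' ?_
    filter_upwards [eventually_gt_atTop 0] with n hn
    field_simp
  simp only [one_div]
  change Tendsto _ _ (𝓝 (growthRate α))
  refine tendsto_of_tendsto_of_tendsto_of_le_of_le' (by simpa using hG.div hsucc one_ne_zero) hG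
    ?_ ?_ <;> filter_upwards [eventually_gt_atTop 0] with n hn
  · exact growthRate_div_le_choose_rpow_inv hn (Nat.ceil_pos.mpr (by positivity))
  · exact choose_rpow_inv_le_growthRate hn (Nat.ceil_pos.mpr (by positivity))

/-- For each real `α ∈ (0,1]`, the sequence
`n ↦ (binom(n + ⌈αn⌉, ⌈αn⌉))^(1/n)` converges to `(1+α)^(1+α)/α^α`. -/
theorem stmt0 (α : ℝ) (hα0 : 0 < α) (hα1 : α ≤ 1) :
    Tendsto
      (fun n : ℕ =>
        (((n + ⌈α * (n : ℝ)⌉₊).choose ⌈α * (n : ℝ)⌉₊ : ℝ)) ^ (1 / (n : ℝ)))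
      atTop (nhds ((1 + α) ^ (1 + α) / α ^ α)) :=
  stmt0_general α hα0
end

section
/- If f : ℕ → ℝ_{>0} satisfies f(n)/n → 0 as n → ∞, then (binom(n + ⌈f(n)⌉, ⌈f(n)⌉))^(1/n) → 1 as n → ∞; i.e., the sequence binom(n+⌈f(n)⌉, ⌈f(n)⌉) grows subexponentially. -/
/-!
The single term `binom(n+k, k) k^k n^n` of the binomial expansion of `(n + k)^(n+k)` gives the
entropy bound `log binom(n+k, k) ≤ n ((1 + t) log (1 + t) - t log t)` with `t = k / n`. The right
factor is a continuous function of `t` vanishing at `0` (as `x log x` is continuous at `0`), and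
`t = ⌈f n⌉ / n → 0`, so `log binom(n+k, k) / n → 0`.
-/

open Filter Topology Real

theorem Nat.add_choose_mul_pow_mul_pow_le (n k : ℕ) :
    (n + k).choose k * (k ^ k * n ^ n) ≤ (n + k) ^ (n + k) :=
  calc (n + k).choose k * (k ^ k * n ^ n)
      = k ^ k * n ^ (n + k - k) * (n + k).choose k := by rw [Nat.add_sub_cancel]; ring
    _ ≤ ∑ i ∈ Finset.range (n + k + 1), k ^ i * n ^ (n + k - i) * (n + k).choose i :=
      Finset.single_le_sum (f := fun i => k ^ i * n ^ (n + k - i) * (n + k).choose i)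
        (fun _ _ => Nat.zero_le _) (by simp)
    _ = (k + n) ^ (n + k) := by simp [add_pow]
    _ = (n + k) ^ (n + k) := by rw [Nat.add_comm k]

theorem Real.log_add_choose_le (n k : ℕ) :
    log ((n + k).choose k) ≤ (n + k) * log (n + k) - k * log k - n * log n := by
  have hchoose : (0 : ℝ) < (n + k).choose k := mod_cast Nat.choose_pos (Nat.le_add_left k n)
  have hk : (0 : ℝ) < k ^ k := mod_cast Nat.pow_self_pos
  have hn : (0 : ℝ) < n ^ n := mod_cast Nat.pow_self_pos
  have key : ((n + k).choose k : ℝ) * (k ^ k * n ^ n) ≤ (n + k) ^ (n + k) :=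
    mod_cast Nat.add_choose_mul_pow_mul_pow_le n k
  have hlog := log_le_log (by positivity) key
  rw [log_mul hchoose.ne' (by positivity), log_mul hk.ne' hn.ne', log_pow, log_pow, log_pow]
    at hlog
  push_cast at hlog
  linarith

theorem Real.log_add_choose_div_le (n k : ℕ) (hn : n ≠ 0) :
    log ((n + k).choose k) / n ≤ (1 + k / n) * log (1 + k / n) - k / n * log (k / n) := by
  rcases eq_or_ne k 0 with rfl | hk
  · simp
  have hnR : (0 : ℝ) < n := by positivity
  have hkR : (0 : ℝ) < k := by positivity
  have hlog₁ : log (1 + k / n) = log (n + k) - log n := by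
    rw [← log_div (by positivity) hnR.ne', add_div, div_self hnR.ne']
  have hlog₂ : log (k / n) = log k - log n := log_div hkR.ne' hnR.ne'
  have hscale : ((1 + k / n) * (log (n + k) - log n) - k / n * (log k - log n)) * n =
      (n + k) * log (n + k) - k * log k - n * log n := by
    field_simp
    ring
  rw [hlog₁, hlog₂, div_le_iff₀ hnR, hscale]
  exact log_add_choose_le n k

theorem tendsto_one_add_mul_log_one_add_sub_mul_log :
    Tendsto (fun x : ℝ => (1 + x) * log (1 + x) - x * log x) (𝓝 0) (𝓝 0) := by
  have hcont : Continuous fun x : ℝ => (1 + x) * log (1 + x) - x * log x :=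
    (continuous_mul_log.comp (continuous_const.add continuous_id)).sub continuous_mul_log
  simpa using hcont.tendsto 0

theorem tendsto_add_choose_rpow_one_div {k : ℕ → ℕ}
    (hk : Tendsto (fun n : ℕ => (k n : ℝ) / n) atTop (𝓝 0)) :
    Tendsto (fun n : ℕ => ((n + k n).choose (k n) : ℝ) ^ (1 / (n : ℝ))) atTop (𝓝 1) := by
  have hlog : Tendsto (fun n : ℕ => log ((n + k n).choose (k n)) / n) atTop (𝓝 0) := by
    refine squeeze_zero' (Eventually.of_forall fun n => by positivity) ?_
      (tendsto_one_add_mul_log_one_add_sub_mul_log.comp hk)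
    filter_upwards [eventually_ne_atTop 0] with n hn
    exact log_add_choose_div_le n (k n) hn
  have hexp := (continuous_exp.tendsto 0).comp hlog
  rw [exp_zero] at hexp
  refine hexp.congr' (Eventually.of_forall fun n => ?_)
  dsimp only [Function.comp_apply]
  rw [rpow_def_of_pos (mod_cast Nat.choose_pos (Nat.le_add_left _ _)),
    div_eq_mul_one_div]

theorem tendsto_natCeil_div_of_tendsto_div {f : ℕ → ℝ}
    (h : Tendsto (fun n : ℕ => f n / n) atTop (𝓝 0)) :
    Tendsto (fun n : ℕ => (⌈f n⌉₊ : ℝ) / n) atTop (𝓝 0) := by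
  have hbound : Tendsto (fun n : ℕ => |f n / n| + 1 / n) atTop (𝓝 0) := by
    simpa using h.abs.add tendsto_one_div_atTop_nhds_zero_nat
  refine squeeze_zero (fun n => by positivity) (fun n => ?_) hbound
  rw [abs_div, Nat.abs_cast, ← add_div]
  gcongr
  exact (Nat.cast_le.mpr (Nat.ceil_mono (le_abs_self (f n)))).trans
    (Nat.ceil_lt_add_one (abs_nonneg _)).le

theorem stmt2_general (f : ℕ → ℝ)
    (h : Tendsto (fun n : ℕ => f n / (n : ℝ)) atTop (nhds 0)) :
    Tendsto
      (fun n : ℕ => (((n + ⌈f n⌉₊).choose ⌈f n⌉₊ : ℝ)) ^ (1 / (n : ℝ)))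
      atTop (nhds 1) :=
  tendsto_add_choose_rpow_one_div (tendsto_natCeil_div_of_tendsto_div h)

/-- If `f : ℕ → ℝ_{>0}` satisfies `f(n)/n → 0`, then
`(binom(n + ⌈f(n)⌉, ⌈f(n)⌉))^(1/n) → 1`, i.e. the sequence grows
subexponentially. -/
theorem stmt2 (f : ℕ → ℝ) (hf : ∀ n, 0 < f n)
    (h : Tendsto (fun n : ℕ => f n / (n : ℝ)) atTop (nhds 0)) :
    Tendsto
      (fun n : ℕ => (((n + ⌈f n⌉₊).choose ⌈f n⌉₊ : ℝ)) ^ (1 / (n : ℝ)))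
      atTop (nhds 1) :=
  stmt2_general f h
end

section
/- Let (b_i)_{i≥1} be a sequence of nonnegative reals such that the partial sums B(n) = Σ_{i=1}^n b_i are subadditive (B(n+m) ≤ B(n)+B(m)) and (1/n)·B(n) → 1 as n → ∞. Then for every m ∈ ℕ_{≥1}, the tail sums Σ_{i = n - ⌊n/m⌋ + 1}^{n} b_i tend to infinity as n → ∞. -/
open Filter Asymptotics Finset

/-!
Writing `B n = n + e n`, the hypothesis `B n / n → 1` says `e = o(n)`, hence
`|e n| ≤ C + ε n` for all `n`.  The tail sum is `B n - B (n - ⌊n/m⌋) = ⌊n/m⌋ + e n - e (n - ⌊n/m⌋)`,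
which with `ε = 1/(4m)` is at least `n/(2m) - 1 - 2C`.
-/

lemma isLittleO_sub_mul_of_tendsto_div {f : ℕ → ℝ} {c : ℝ}
    (h : Tendsto (fun n => f n / n) atTop (nhds c)) :
    (fun n => f n - c * n) =o[atTop] (fun n : ℕ => (n : ℝ)) := by
  refine (isLittleO_iff_tendsto' ?_).2 ?_
  · filter_upwards [eventually_ne_atTop 0] with n hn h0
    exact absurd h0 (Nat.cast_ne_zero.2 hn)
  · have hsub := h.sub_const c
    rw [sub_self] at hsub
    refine hsub.congr' ?_
    filter_upwards [eventually_ne_atTop 0] with n hn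
    field_simp

lemma Asymptotics.IsLittleO.exists_abs_le_add_mul {e : ℕ → ℝ}
    (h : e =o[atTop] (fun n : ℕ => (n : ℝ))) {ε : ℝ} (hε : 0 < ε) :
    ∃ C, ∀ n, |e n| ≤ C + ε * n := by
  obtain ⟨N, hN⟩ := eventually_atTop.1 (h.bound hε)
  refine ⟨∑ k ∈ range N, |e k|, fun n => ?_⟩
  have hsum_nonneg : 0 ≤ ∑ k ∈ range N, |e k| := sum_nonneg fun k _ => abs_nonneg _
  rcases lt_or_ge n N with hn | hn
  · have hle_sum :=
      single_le_sum (f := fun k => |e k|) (fun k _ => abs_nonneg _) (mem_range.2 hn)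
    have hεn : 0 ≤ ε * n := by positivity
    linarith
  · simpa [Real.norm_eq_abs] using (hN n hn).trans (le_add_of_nonneg_left hsum_nonneg)

lemma sum_Icc_add_one_eq_sub {M : Type*} [AddCommGroup M] (b : ℕ → M) {k n : ℕ} (h : k ≤ n) :
    ∑ i ∈ Icc (k + 1) n, b i = ∑ i ∈ Icc 1 n, b i - ∑ i ∈ Icc 1 k, b i := by
  have hIcc (j : ℕ) : Icc 1 j = Ioc 0 j := Icc_add_one_left_eq_Ioc 0 j
  rw [eq_sub_iff_add_eq', Icc_add_one_left_eq_Ioc, hIcc, hIcc]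
  exact sum_Ioc_consecutive b k.zero_le h

lemma Nat.cast_div_sub_one_lt {K : Type*} [Field K] [LinearOrder K] [IsStrictOrderedRing K]
    [FloorSemiring K] (n m : ℕ) : (n : K) / m - 1 < ((n / m : ℕ) : K) := by
  rw [← Nat.floor_div_eq_div (K := K)]
  exact Nat.sub_one_lt_floor _

theorem stmt4_general (b : ℕ → ℝ)
    (hlim : Tendsto (fun n : ℕ => (∑ i ∈ Finset.Icc 1 n, b i) / (n : ℝ))
      atTop (nhds 1)) :
    ∀ m : ℕ, 1 ≤ m →
      Tendsto (fun n : ℕ => ∑ i ∈ Finset.Icc (n - n / m + 1) n, b i)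
        atTop atTop := by
  intro m hm
  have hm0 : (0 : ℝ) < m := by exact_mod_cast hm
  set ε : ℝ := 1 / (4 * m) with hε
  obtain ⟨C, hC⟩ := (isLittleO_sub_mul_of_tendsto_div hlim).exists_abs_le_add_mul
    (ε := ε) (by positivity)
  have hlow : ∀ n : ℕ, (n : ℝ) / (2 * m) - (1 + 2 * C) ≤ ∑ i ∈ Icc (n - n / m + 1) n, b i := by
    intro n
    have hdiv : n / m ≤ n := Nat.div_le_self n m
    have hk : ε * (n - n / m : ℕ) ≤ ε * n :=
      mul_le_mul_of_nonneg_left (by exact_mod_cast Nat.sub_le n (n / m)) (by positivity)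
    have hcast : ((n - n / m : ℕ) : ℝ) = n - (n / m : ℕ) := Nat.cast_sub hdiv
    have hfloor : (n : ℝ) / m - 1 < (n / m : ℕ) := Nat.cast_div_sub_one_lt n m
    have hn := abs_le.1 (hC n)
    have hk' := abs_le.1 (hC (n - n / m))
    rw [sum_Icc_add_one_eq_sub b (Nat.sub_le n (n / m))]
    have h4m : (n : ℝ) / (2 * m) = (n : ℝ) / m - 2 * (ε * n) := by rw [hε]; field_simp; ring
    linarith [hn.1, hk'.2]
  refine tendsto_atTop_mono hlow (tendsto_atTop_add_const_right _ _ ?_)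
  exact tendsto_natCast_atTop_atTop.atTop_div_const (by positivity)

/-- Let `(b_i)` be nonnegative reals whose partial sums `B(n) = Σ_{i=1}^n b_i`
are subadditive and satisfy `B(n)/n → 1`.  Then for every `m ≥ 1` the tail
sums `Σ_{i = n - ⌊n/m⌋ + 1}^n b_i` tend to infinity. -/
theorem stmt4 (b : ℕ → ℝ) (hb : ∀ i, 0 ≤ b i)
    (hsub : ∀ n m : ℕ,
      (∑ i ∈ Finset.Icc 1 (n + m), b i) ≤
        (∑ i ∈ Finset.Icc 1 n, b i) + (∑ i ∈ Finset.Icc 1 m, b i))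
    (hlim : Tendsto (fun n : ℕ => (∑ i ∈ Finset.Icc 1 n, b i) / (n : ℝ))
      atTop (nhds 1)) :
    ∀ m : ℕ, 1 ≤ m →
      Tendsto (fun n : ℕ => ∑ i ∈ Finset.Icc (n - n / m + 1) n, b i)
        atTop atTop :=
  stmt4_general b hlim
end

section
/- Let G be a finitely generated group of exponential word growth with finite generating set S, so that λ = lim_n |B_S(n)|^(1/n) > 1. Then there exists a non-decreasing unbounded function q : ℕ → ℝ_{≥0} with q(n)/n → 0 such that |B_S(n)| / |B_S(n - ⌊q(n)⌋)| → ∞ as n → ∞. -/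
/-!
Write `a n = log |B_S(n)|`. Since `B_S(m + n) ⊆ B_S(m) B_S(n)`, the sequence `a` is subadditive,
so by Fekete's lemma its growth rate `L = lim a n / n = log λ > 0` is also `inf a n / n`,
i.e. `n L ≤ a n` for every `n`. The defect `c n = a n - n L` is therefore nonnegative and `o(n)`,
and so is its running maximum `d n`. Taking `q n = (d n + √n + 1) / L` and `k = ⌊q n⌋`,
`a n - a (n - k) ≥ n L - ((n - k) L + d n) = k L - d n ≥ √n + 1 - L → ∞`.
-/

open Filter

/-- The ball of radius `n` in the Cayley graph of `G` with respect to the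
(symmetrized) generating set `S`. -/
def ball {G : Type*} [Group G] (S : Set G) (n : ℕ) : Set G :=
  {g | ∃ w : List G, w.length ≤ n ∧ (∀ x ∈ w, x ∈ S ∨ x⁻¹ ∈ S) ∧ w.prod = g}

open Topology

section Ball

open scoped Pointwise

variable {G : Type*} [Group G] (S : Set G)

lemma one_mem_ball (n : ℕ) : (1 : G) ∈ ball S n :=
  ⟨[], by simp, by simp, rfl⟩

lemma ball_zero : ball S 0 = {1} := by
  refine Set.Subset.antisymm ?_ (Set.singleton_subset_iff.2 (one_mem_ball S 0))
  rintro g ⟨w, hw, -, rfl⟩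
  simp [List.length_eq_zero_iff.1 (Nat.le_zero.1 hw)]

lemma ball_one_subset : ball S 1 ⊆ insert 1 (S ∪ S⁻¹) := by
  rintro g ⟨w, hw, hS, rfl⟩
  match w, hw with
  | [], _ => simp
  | [x], _ => simpa using Or.inr (hS x (by simp))

lemma ball_add_subset (m n : ℕ) : ball S (m + n) ⊆ ball S m * ball S n := by
  rintro g ⟨w, hw, hS, rfl⟩
  refine ⟨(w.take m).prod, ⟨w.take m, by simp, fun x hx => hS x (List.mem_of_mem_take hx), rfl⟩,
    (w.drop m).prod, ⟨w.drop m, by simp; omega, fun x hx => hS x (List.mem_of_mem_drop hx), rfl⟩,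
    w.prod_take_mul_prod_drop m⟩

variable {S}

lemma finite_ball (hS : S.Finite) (n : ℕ) : (ball S n).Finite := by
  induction n with
  | zero => simp [ball_zero]
  | succ n ih =>
    have h1 : (ball S 1).Finite := ((hS.union hS.inv).insert 1).subset (ball_one_subset S)
    exact (ih.mul h1).subset (ball_add_subset S n 1)

lemma ncard_ball_pos (hS : S.Finite) (n : ℕ) : 0 < (ball S n).ncard :=
  (Set.ncard_pos (finite_ball hS n)).2 ⟨1, one_mem_ball S n⟩

lemma ncard_ball_add_le (hS : S.Finite) (m n : ℕ) :
    (ball S (m + n)).ncard ≤ (ball S m).ncard * (ball S n).ncard := by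
  calc (ball S (m + n)).ncard ≤ (ball S m * ball S n).ncard :=
        Set.ncard_le_ncard (ball_add_subset S m n) ((finite_ball hS m).mul (finite_ball hS n))
    _ ≤ (ball S m).ncard * (ball S n).ncard := by
        simpa only [← Nat.card_coe_set_eq] using Set.natCard_mul_le

lemma subadditive_log_ncard_ball (hS : S.Finite) :
    Subadditive fun n => Real.log (ball S n).ncard := by
  intro m n
  have hpos : ∀ k, (0 : ℝ) < (ball S k).ncard := fun k => by exact_mod_cast ncard_ball_pos hS k
  rw [← Real.log_mul (hpos m).ne' (hpos n).ne']
  exact Real.log_le_log (hpos _) (by exact_mod_cast ncard_ball_add_le hS m n)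

end Ball

lemma Subadditive.natCast_mul_le_of_tendsto {u : ℕ → ℝ} (h : Subadditive u) {L : ℝ}
    (hL : Tendsto (fun n => u n / n) atTop (𝓝 L)) (n : ℕ) : n * L ≤ u n := by
  rcases n.eq_zero_or_pos with rfl | hn
  · simpa using h 0 0
  have hlim : h.lim = L := tendsto_nhds_unique (h.tendsto_lim hL.bddBelow_range) hL
  have := hlim ▸ h.lim_le_div hL.bddBelow_range hn.ne'
  rwa [le_div_iff₀ (by positivity), mul_comm] at this

lemma tendsto_partialSups_div_natCast {c : ℕ → ℝ} (hc : Tendsto (fun n => c n / n) atTop (𝓝 0)) :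
    Tendsto (fun n => partialSups c n / n) atTop (𝓝 0) := by
  refine tendsto_order.2 ⟨fun ε hε => ?_, fun ε hε => ?_⟩
  · filter_upwards [(tendsto_const_div_atTop_nhds_zero_nat (c 0)).eventually_const_lt hε]
      with n hlt
    exact hlt.trans_le (div_le_div_of_nonneg_right (le_partialSups_of_le c n.zero_le) n.cast_nonneg)
  · obtain ⟨N, hN⟩ := eventually_atTop.1 (hc.eventually_lt_const hε)
    filter_upwards [(tendsto_const_div_atTop_nhds_zero_nat (partialSups c N)).eventually_lt_const hε,
      eventually_gt_atTop N] with n hlt hn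
    have hn0 : (0 : ℝ) < n := by exact_mod_cast N.zero_le.trans_lt hn
    rw [div_lt_iff₀ hn0] at hlt ⊢
    refine (partialSups_iff_forall (· < ε * n) sup_lt_iff).2 fun m hm => ?_
    rcases le_or_gt m N with hmN | hNm
    · exact (le_partialSups_of_le c hmN).trans_lt hlt
    · have hm0 : (0 : ℝ) < m := by exact_mod_cast N.zero_le.trans_lt hNm
      have hcm := (div_lt_iff₀ hm0).1 (hN m hNm.le)
      have hmn : (m : ℝ) ≤ n := by exact_mod_cast hm
      nlinarith

lemma tendsto_sqrt_natCast_div_natCast : Tendsto (fun n : ℕ => √n / n) atTop (𝓝 0) := by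
  simp only [Real.sqrt_div_self]
  exact tendsto_inv_atTop_zero.comp (Real.tendsto_sqrt_atTop.comp tendsto_natCast_atTop_atTop)

lemma natCast_mul_sub_partialSups_le_sub {a : ℕ → ℝ} {L : ℝ} (hlow : ∀ n, n * L ≤ a n)
    {k n : ℕ} (hk : k ≤ n) :
    k * L - partialSups (fun m => a m - m * L) n ≤ a n - a (n - k) := by
  have hsup := le_partialSups_of_le (fun m => a m - m * L) (n.sub_le k)
  have hn := hlow n
  simp only [Nat.cast_sub hk] at hsup
  linarith

theorem exists_sublinear_tendsto_sub_atTop {a : ℕ → ℝ} {L : ℝ} (hL : 0 < L)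
    (hlow : ∀ n, n * L ≤ a n) (hlim : Tendsto (fun n => a n / n) atTop (𝓝 L)) :
    ∃ q : ℕ → ℝ, Monotone q ∧ (∀ n, 0 ≤ q n) ∧ Tendsto q atTop atTop ∧
      Tendsto (fun n => q n / n) atTop (𝓝 0) ∧
      Tendsto (fun n => a n - a (n - ⌊q n⌋₊)) atTop atTop := by
  set d := partialSups fun m => a m - m * L
  have hd0 (n : ℕ) : 0 ≤ d n :=
    (sub_nonneg.2 (hlow 0)).trans (le_partialSups_of_le (fun m => a m - m * L) n.zero_le)
  have hd : Tendsto (fun n => d n / n) atTop (𝓝 0) := by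
    refine tendsto_partialSups_div_natCast ((sub_self L ▸ hlim.sub_const L).congr' ?_)
    filter_upwards [eventually_gt_atTop 0] with n hn
    field_simp
  have hsqrt : Tendsto (fun n : ℕ => √n) atTop atTop :=
    Real.tendsto_sqrt_atTop.comp tendsto_natCast_atTop_atTop
  set q : ℕ → ℝ := fun n => (d n + √n + 1) / L
  have hq : Tendsto (fun n => q n / n) atTop (𝓝 0) := by
    have := ((hd.add tendsto_sqrt_natCast_div_natCast).add
      tendsto_one_div_atTop_nhds_zero_nat).div_const L
    simp only [add_zero, zero_div] at this
    refine this.congr' ?_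
    filter_upwards [eventually_gt_atTop 0] with n hn
    simp only [q]
    field_simp
  refine ⟨q, fun m n hmn => ?_, fun n => by have := hd0 n; positivity, ?_, hq, ?_⟩
  · have hsqrt_le := Real.sqrt_le_sqrt (Nat.cast_le.2 hmn)
    have hd_le := d.monotone hmn
    simp only [q]
    gcongr
  · refine tendsto_atTop_mono (fun n => ?_) (hsqrt.atTop_div_const hL)
    have := hd0 n
    simp only [q]
    gcongr
    linarith
  · refine tendsto_atTop_mono' _ ?_ (tendsto_atTop_add_const_right _ (1 - L) hsqrt)
    filter_upwards [hq.eventually_lt_const one_pos, eventually_gt_atTop 0] with n hqn hn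
    have hk : ⌊q n⌋₊ ≤ n := Nat.floor_le_of_le ((div_lt_one (by positivity)).1 hqn).le
    calc √n + (1 - L) = (q n - 1) * L - d n := by simp only [q]; field_simp; ring
      _ ≤ ⌊q n⌋₊ * L - d n := by gcongr; exact (Nat.sub_one_lt_floor (q n)).le
      _ ≤ a n - a (n - ⌊q n⌋₊) := natCast_mul_sub_partialSups_le_sub hlow hk

theorem stmt5_general {G : Type*} [Group G] (S : Finset G)
    (lam : ℝ)
    (hlam : Tendsto (fun n : ℕ => ((ball (S : Set G) n).ncard : ℝ) ^ (1 / (n : ℝ)))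
      atTop (nhds lam))
    (hexp : 1 < lam) :
    ∃ q : ℕ → ℝ, Monotone q ∧ (∀ n, 0 ≤ q n) ∧ Tendsto q atTop atTop ∧
      Tendsto (fun n : ℕ => q n / (n : ℝ)) atTop (nhds 0) ∧
      Tendsto
        (fun n : ℕ => ((ball (S : Set G) n).ncard : ℝ) /
          ((ball (S : Set G) (n - ⌊q n⌋₊)).ncard : ℝ))
        atTop atTop := by
  have hpos (n : ℕ) : (0 : ℝ) < (ball (S : Set G) n).ncard := by
    exact_mod_cast ncard_ball_pos S.finite_toSet n
  set a : ℕ → ℝ := fun n => Real.log (ball (S : Set G) n).ncard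
  have hlim : Tendsto (fun n => a n / n) atTop (𝓝 (Real.log lam)) :=
    ((Real.continuousAt_log (by linarith)).tendsto.comp hlam).congr fun n => by
      simp [a, Real.log_rpow (hpos n), div_eq_inv_mul]
  obtain ⟨q, hmono, hnonneg, htop, hdiv, hgap⟩ := exists_sublinear_tendsto_sub_atTop
    (Real.log_pos hexp) ((subadditive_log_ncard_ball S.finite_toSet).natCast_mul_le_of_tendsto hlim)
    hlim
  refine ⟨q, hmono, hnonneg, htop, hdiv, (Real.tendsto_exp_atTop.comp hgap).congr fun n => ?_⟩
  simp [Real.exp_sub, Real.exp_log (hpos _)]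

/-- Let `G` be a finitely generated group of exponential word growth with
finite generating set `S`, so `λ = lim |B_S(n)|^{1/n} > 1`.  Then there is a
non-decreasing unbounded function `q : ℕ → ℝ_{≥0}` with `q(n)/n → 0` such that
`|B_S(n)|/|B_S(n - ⌊q(n)⌋)| → ∞`. -/
theorem stmt5 {G : Type*} [Group G] (S : Finset G)
    (hSgen : Subgroup.closure (S : Set G) = ⊤)
    (lam : ℝ)
    (hlam : Tendsto (fun n : ℕ => ((ball (S : Set G) n).ncard : ℝ) ^ (1 / (n : ℝ)))
      atTop (nhds lam))
    (hexp : 1 < lam) :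
    ∃ q : ℕ → ℝ, Monotone q ∧ (∀ n, 0 ≤ q n) ∧ Tendsto q atTop atTop ∧
      Tendsto (fun n : ℕ => q n / (n : ℝ)) atTop (nhds 0) ∧
      Tendsto
        (fun n : ℕ => ((ball (S : Set G) n).ncard : ℝ) /
          ((ball (S : Set G) (n - ⌊q n⌋₊)).ncard : ℝ))
        atTop atTop :=
  stmt5_general S lam hlam hexp
end

section
/- Let G = F × ⟨t⟩ where F is the free group of rank 2 and ⟨t⟩ ≅ ℤ, with S = {x,y,t}. Then the density of F in G with respect to S equals 1/2, i.e., lim_{n→∞} |B_{G,S}(n) ∩ F| / |B_{G,S}(n)| = 1/2. -/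
open Filter

abbrev F2 : Type := FreeGroup (Fin 2)
abbrev G2 : Type := F2 × Multiplicative ℤ

def xF : F2 := FreeGroup.of 0
def yF : F2 := FreeGroup.of 1
def tG : G2 := (1, Multiplicative.ofAdd 1)

def SG : Set G2 := {(xF, 1), (yF, 1), tG}

/-!
The word length on `F₂ × ℤ` with respect to `{x, y, t}` is `‖(f, k)‖ = |f| + |k|`, where `|f|` is
the length of the reduced word of `f`. There are `4 · 3 ^ j` reduced words of length `j + 1`, so
the free-group ball of radius `m` has `2 · 3 ^ m - 1` elements; summing these over the slices
`k ∈ [-n, n]` gives `|B(n)| = 4 · 3 ^ n - 2n - 3`, and the ratio of the two counts tends to `1/2`.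
-/

open Finset

section WordBall

variable {G : Type*} [Group G] {S : Set G}

theorem ball_mono {m n : ℕ} (h : m ≤ n) : ball S m ⊆ ball S n :=
  fun _ ⟨w, hw, hwS, hg⟩ => ⟨w, hw.trans h, hwS, hg⟩

theorem mul_mem_ball {g h : G} {m n : ℕ} (hg : g ∈ ball S m) (hh : h ∈ ball S n) :
    g * h ∈ ball S (m + n) := by
  obtain ⟨v, hv, hvS, rfl⟩ := hg
  obtain ⟨w, hw, hwS, rfl⟩ := hh
  refine ⟨v ++ w, by simp only [List.length_append]; omega, fun x hx => ?_, List.prod_append⟩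
  exact (List.mem_append.1 hx).elim (hvS x) (hwS x)

theorem zpow_mem_ball {s : G} (hs : s ∈ S) (k : ℤ) : s ^ k ∈ ball S k.natAbs := by
  cases k with
  | ofNat m =>
    exact ⟨List.replicate m s, by simp, fun x hx => .inl (List.eq_of_mem_replicate hx ▸ hs),
      by simp⟩
  | negSucc m =>
    refine ⟨List.replicate (m + 1) s⁻¹, by simp, fun x hx => .inr ?_, ?_⟩
    · rwa [List.eq_of_mem_replicate hx, inv_inv]
    · rw [List.prod_replicate, inv_pow, zpow_negSucc]

theorem map_mem_ball {H : Type*} [Group H] {T : Set H} (φ : H →* G) (hφ : ∀ t ∈ T, φ t ∈ S)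
    {h : H} {n : ℕ} (hh : h ∈ ball T n) : φ h ∈ ball S n := by
  obtain ⟨w, hw, hwT, rfl⟩ := hh
  refine ⟨w.map φ, by simpa using hw, ?_, (map_list_prod φ w).symm⟩
  simp only [List.mem_map, forall_exists_index, and_imp, forall_apply_eq_imp_iff₂]
  intro t ht
  rcases hwT t ht with ht' | ht'
  · exact .inl (hφ t ht')
  · exact .inr (map_inv φ t ▸ hφ _ ht')

theorem le_of_mem_ball (ℓ : G → ℕ) (h_one : ℓ 1 = 0) (h_mul : ∀ g h, ℓ (g * h) ≤ ℓ g + ℓ h)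
    (h_inv : ∀ g, ℓ g⁻¹ = ℓ g) (hS : ∀ s ∈ S, ℓ s ≤ 1) {g : G} {n : ℕ} (hg : g ∈ ball S n) :
    ℓ g ≤ n := by
  obtain ⟨w, hw, hwS, rfl⟩ := hg
  refine le_trans ?_ hw
  clear hw
  induction w with
  | nil => simp [h_one]
  | cons x w ih =>
    have hx : ℓ x ≤ 1 := (hwS x (by simp)).elim (hS x) (fun h => h_inv x ▸ hS _ h)
    have hrest := ih (fun y hy => hwS y (by simp [hy]))
    rw [List.prod_cons, List.length_cons]
    have := h_mul x w.prod
    omega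

end WordBall

namespace FreeGroup

variable {α : Type*} [DecidableEq α]

theorem mem_ball_range_of (x : FreeGroup α) : x ∈ ball (Set.range of) x.norm := by
  refine ⟨x.toWord.map fun q => cond q.2 (of q.1) (of q.1)⁻¹, by simp [norm], ?_, ?_⟩
  · simp only [List.mem_map, forall_exists_index, and_imp, forall_apply_eq_imp_iff₂]
    rintro ⟨a, (_ | _)⟩ -
    · exact .inr ⟨a, (inv_inv _).symm⟩
    · exact .inl ⟨a, rfl⟩
  · rw [← lift_mk, lift_of_eq_id, MonoidHom.id_apply, mk_toWord]

theorem norm_mk_of_isReduced {w : List (α × Bool)} (hw : IsReduced w) : (mk w).norm = w.length := by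
  rw [norm, toWord_mk, hw.reduce_eq]

variable [Fintype α]

def consLetters : List (α × Bool) → Finset (α × Bool)
  | [] => univ
  | b :: _ => univ.erase (b.1, !b.2)

theorem isReduced_cons_iff {a : α × Bool} {w : List (α × Bool)} :
    IsReduced (a :: w) ↔ a ∈ consLetters w ∧ IsReduced w := by
  cases w with
  | nil => simp [consLetters, IsReduced.singleton, IsReduced.nil]
  | cons b v =>
    rw [isReduced_cons_cons]
    obtain ⟨a₁, a₂⟩ := a
    obtain ⟨b₁, b₂⟩ := b
    cases a₂ <;> cases b₂ <;> simp [consLetters, eq_comm]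

theorem card_consLetters_cons (b : α × Bool) (v : List (α × Bool)) :
    #(consLetters (b :: v)) = 2 * Fintype.card α - 1 := by
  rw [consLetters, card_erase_of_mem (mem_univ _), card_univ, Fintype.card_prod,
    Fintype.card_bool, mul_comm]

variable (α) in
def reducedWords : ℕ → Finset (List (α × Bool))
  | 0 => {[]}
  | n + 1 => (reducedWords n).biUnion fun w => (consLetters w).image (· :: w)

theorem mem_reducedWords {n : ℕ} {w : List (α × Bool)} :
    w ∈ reducedWords α n ↔ w.length = n ∧ IsReduced w := by
  induction n generalizing w with
  | zero =>
    simp only [reducedWords, mem_singleton, List.length_eq_zero_iff]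
    exact ⟨fun h => ⟨h, h ▸ .nil⟩, And.left⟩
  | succ n ih =>
    simp only [reducedWords, mem_biUnion, mem_image, ih]
    constructor
    · rintro ⟨v, ⟨hlen, hv⟩, a, ha, rfl⟩
      exact ⟨by simp [hlen], isReduced_cons_iff.2 ⟨ha, hv⟩⟩
    · rintro ⟨hlen, hw⟩
      obtain ⟨a, v, rfl⟩ := List.exists_cons_of_length_eq_add_one hlen
      obtain ⟨ha, hv⟩ := isReduced_cons_iff.1 hw
      exact ⟨v, ⟨by simpa using hlen, hv⟩, a, ha, rfl⟩

theorem card_reducedWords_succ (n : ℕ) :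
    #(reducedWords α (n + 1)) = ∑ w ∈ reducedWords α n, #(consLetters w) := by
  rw [reducedWords, card_biUnion]
  · exact sum_congr rfl fun w _ => card_image_of_injective _ fun _ _ h => (List.cons.inj h).1
  · intro v _ w _ hvw
    simp only [Function.onFun, disjoint_left, mem_image]
    rintro _ ⟨a, -, rfl⟩ ⟨b, -, h⟩
    exact hvw (List.cons_eq_cons.1 h).2.symm

theorem card_reducedWords (n : ℕ) :
    #(reducedWords α (n + 1)) = 2 * Fintype.card α * (2 * Fintype.card α - 1) ^ n := by
  induction n with
  | zero =>
    rw [card_reducedWords_succ, reducedWords, sum_singleton, consLetters, card_univ,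
      Fintype.card_prod, Fintype.card_bool]
    ring
  | succ n ih =>
    rw [card_reducedWords_succ, sum_congr rfl (g := fun _ => 2 * Fintype.card α - 1), sum_const,
      ih, smul_eq_mul, pow_succ]
    · ring
    · intro w hw
      obtain ⟨hlen, -⟩ := mem_reducedWords.1 hw
      obtain ⟨b, v, rfl⟩ := List.exists_cons_of_length_eq_add_one hlen
      exact card_consLetters_cons b v

variable (α) in
def normBall (m : ℕ) : Finset (FreeGroup α) :=
  ((range (m + 1)).biUnion (reducedWords α)).image mk

theorem mem_normBall {m : ℕ} {x : FreeGroup α} : x ∈ normBall α m ↔ x.norm ≤ m := by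
  simp only [normBall, mem_image, mem_biUnion, mem_range, mem_reducedWords]
  constructor
  · rintro ⟨w, ⟨j, hj, rfl, hw⟩, rfl⟩
    rw [norm_mk_of_isReduced hw]
    omega
  · exact fun h => ⟨x.toWord, ⟨x.norm, by omega, rfl, isReduced_toWord⟩, mk_toWord⟩

theorem card_normBall (m : ℕ) : #(normBall α m) = ∑ j ∈ range (m + 1), #(reducedWords α j) := by
  rw [normBall, card_image_of_injOn, card_biUnion]
  · intro i _ j _ hij
    simp only [Function.onFun, disjoint_left, mem_reducedWords]
    exact fun w hi hj => hij (hi.1.symm.trans hj.1)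
  · intro v hv w hw h
    simp only [coe_biUnion, Set.mem_iUnion, mem_coe, mem_reducedWords] at hv hw
    obtain ⟨-, -, -, hv⟩ := hv
    obtain ⟨-, -, -, hw⟩ := hw
    rw [← hv.reduce_eq, ← hw.reduce_eq, ← toWord_mk, h, toWord_mk]

theorem card_normBall_mul_add_one [Nonempty α] (m : ℕ) :
    (Fintype.card α - 1) * #(normBall α m) + 1 =
      Fintype.card α * (2 * Fintype.card α - 1) ^ m := by
  obtain ⟨r, hr⟩ : ∃ r, Fintype.card α = r + 1 := Nat.exists_eq_add_one.2 Fintype.card_pos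
  induction m with
  | zero =>
    simp only [card_normBall, zero_add, range_one, sum_singleton, reducedWords, card_singleton,
      mul_one, pow_zero]
    omega
  | succ m ih =>
    rw [card_normBall, sum_range_succ, ← card_normBall, card_reducedWords]
    rw [hr, show 2 * (r + 1) - 1 = 2 * r + 1 by omega, Nat.add_sub_cancel] at ih ⊢
    linear_combination ih

end FreeGroup

section ProductWithInt

variable {α : Type*} [Fintype α] [DecidableEq α]

variable (α) in
noncomputable def normBallProd (n : ℕ) : Finset (FreeGroup α × Multiplicative ℤ) :=
  (Icc (-n : ℤ) n).biUnion fun k => (FreeGroup.normBall α (n - k.natAbs)).image (·, .ofAdd k)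

theorem mem_normBallProd {n : ℕ} {p : FreeGroup α × Multiplicative ℤ} :
    p ∈ normBallProd α n ↔ p.1.norm + p.2.toAdd.natAbs ≤ n := by
  simp only [normBallProd, mem_biUnion, mem_Icc, mem_image, FreeGroup.mem_normBall]
  constructor
  · rintro ⟨k, hk, f, hf, rfl⟩
    simp only [toAdd_ofAdd]
    omega
  · exact fun h => ⟨p.2.toAdd, by omega, p.1, by omega, rfl⟩

variable (α) in
theorem card_normBallProd (n : ℕ) :
    #(normBallProd α n) = ∑ k ∈ Icc (-n : ℤ) n, #(FreeGroup.normBall α (n - k.natAbs)) := by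
  rw [normBallProd, card_biUnion]
  · exact sum_congr rfl fun k _ => card_image_of_injective _ fun _ _ h => (Prod.mk.inj h).1
  · intro k _ l _ hkl
    simp only [Function.onFun, disjoint_left, mem_image]
    rintro _ ⟨f, -, rfl⟩ ⟨g, -, h⟩
    exact hkl (congrArg (fun p => p.2.toAdd) h).symm

end ProductWithInt

theorem card_normBall_fin_two (m : ℕ) :
    (#(FreeGroup.normBall (Fin 2) m) : ℝ) = 2 * 3 ^ m - 1 := by
  have h := FreeGroup.card_normBall_mul_add_one (α := Fin 2) m
  norm_num at h
  rw [eq_sub_iff_add_eq]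
  exact_mod_cast h

theorem card_normBallProd_fin_two (n : ℕ) :
    (#(normBallProd (Fin 2) n) : ℝ) = 4 * 3 ^ n - 2 * n - 3 := by
  have h_even : Function.Even fun k : ℤ => (2 * 3 ^ (n - k.natAbs) - 1 : ℝ) := by
    intro k
    simp
  have h_reflect : ∑ j ∈ range (n + 1), (3 : ℝ) ^ (n - j) = ∑ j ∈ range (n + 1), 3 ^ j := by
    simpa using sum_range_reflect (fun j => (3 : ℝ) ^ j) (n + 1)
  have h_geom := geom_sum_mul_add (2 : ℝ) (n + 1)
  norm_num at h_geom
  rw [card_normBallProd, Nat.cast_sum]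
  simp only [card_normBall_fin_two]
  rw [sum_Icc_of_even_eq_range h_even]
  simp only [Int.natAbs_natCast, Int.natAbs_zero, Nat.sub_zero, sum_sub_distrib, ← mul_sum,
    h_reflect, sum_const, card_range, nsmul_eq_mul, Nat.cast_add_one]
  linear_combination (2 : ℝ) * h_geom

theorem tendsto_density_ratio :
    Tendsto (fun n : ℕ => (2 * 3 ^ n - 1 : ℝ) / (4 * 3 ^ n - 2 * n - 3)) atTop (nhds (1 / 2)) := by
  have h_pow := tendsto_pow_atTop_nhds_zero_of_lt_one (r := (1 / 3 : ℝ)) (by norm_num) (by norm_num)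
  have h_mul := tendsto_self_mul_const_pow_of_lt_one (r := (1 / 3 : ℝ)) (by norm_num) (by norm_num)
  have h_lim := (tendsto_const_nhds (x := (2 : ℝ))).sub h_pow |>.div
    ((tendsto_const_nhds (x := (4 : ℝ))).sub ((h_mul.const_mul 2).add (h_pow.const_mul 3)))
    (by norm_num)
  refine (h_lim.congr fun n => ?_).trans (by norm_num)
  have h3 : (3 : ℝ) ^ n * (1 / 3) ^ n = 1 := by rw [← mul_pow]; norm_num
  rw [Pi.div_apply, ← mul_div_mul_left _ _ (pow_ne_zero n three_ne_zero)]
  congr 1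
  · linear_combination -h3
  · linear_combination -(2 * n + 3 : ℝ) * h3

theorem norm_add_natAbs_le_one_of_mem_SG {s : G2} (hs : s ∈ SG) :
    s.1.norm + s.2.toAdd.natAbs ≤ 1 := by
  rcases hs with rfl | rfl | rfl <;> simp [xF, yF, tG, FreeGroup.norm_of, FreeGroup.norm_one]

theorem ball_SG (n : ℕ) : ball SG n = {p | p.1.norm + p.2.toAdd.natAbs ≤ n} := by
  ext p
  constructor
  · refine le_of_mem_ball (fun p : G2 => p.1.norm + p.2.toAdd.natAbs) (by simp) (fun g h => ?_)
      (fun g => by simp [FreeGroup.norm_inv_eq]) (fun s => norm_add_natAbs_le_one_of_mem_SG)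
    have := FreeGroup.norm_mul_le g.1 h.1
    have := Int.natAbs_add_le g.2.toAdd h.2.toAdd
    simp only [Prod.fst_mul, Prod.snd_mul, toAdd_mul]
    omega
  · intro hp
    have h_free : (p.1, 1) ∈ ball SG p.1.norm := by
      refine map_mem_ball (MonoidHom.inl F2 (Multiplicative ℤ)) ?_ (FreeGroup.mem_ball_range_of p.1)
      rintro _ ⟨i, rfl⟩
      fin_cases i <;> simp [SG, xF, yF]
    have h_int : (1, p.2) ∈ ball SG p.2.toAdd.natAbs := by
      convert zpow_mem_ball (show tG ∈ SG by simp [SG]) p.2.toAdd using 1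
      refine Prod.ext ?_ ?_ <;> simp [tG, ← ofAdd_zsmul]
    exact ball_mono hp (by simpa using mul_mem_ball h_free h_int)

theorem ncard_ball_SG_inter (n : ℕ) :
    ((ball SG n ∩ {p : G2 | p.2 = 1}).ncard : ℝ) = 2 * 3 ^ n - 1 := by
  have h_image : ball SG n ∩ {p : G2 | p.2 = 1} =
      (fun f => (f, 1)) '' (FreeGroup.normBall (Fin 2) n : Set F2) := by
    ext ⟨f, k⟩
    simp only [ball_SG, Set.mem_inter_iff, Set.mem_ofPred_eq, Set.mem_image, mem_coe,
      FreeGroup.mem_normBall, Prod.mk.injEq]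
    constructor
    · rintro ⟨h, rfl⟩
      exact ⟨f, by simpa using h, rfl, rfl⟩
    · rintro ⟨f, h, rfl, rfl⟩
      exact ⟨by simpa using h, rfl⟩
  rw [h_image, Set.ncard_image_of_injective _ (Prod.mk_left_injective 1), Set.ncard_coe_finset,
    card_normBall_fin_two]

theorem ncard_ball_SG (n : ℕ) : ((ball SG n).ncard : ℝ) = 4 * 3 ^ n - 2 * n - 3 := by
  have h_coe : ball SG n = (normBallProd (Fin 2) n : Set G2) := by
    ext p
    simp [ball_SG, mem_normBallProd]
  rw [h_coe, Set.ncard_coe_finset, card_normBallProd_fin_two]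

/-- In `G = F × ⟨t⟩` with `S = {x,y,t}`, the density of `F` in `G` equals
`1/2`: `lim_n |B_{G,S}(n) ∩ F| / |B_{G,S}(n)| = 1/2`. -/
theorem stmt10 :
    Tendsto (fun n : ℕ =>
      ((ball SG n ∩ {p : G2 | p.2 = 1}).ncard : ℝ) / ((ball SG n).ncard : ℝ))
      atTop (nhds (1 / 2)) := by
  refine tendsto_density_ratio.congr fun n => ?_
  rw [ncard_ball_SG_inter, ncard_ball_SG]
end
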